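/- arXiv:1910.00193 — 2 statements merged into one kernel-verified Lean document; each statement's English description precedes it below -/
import Mathlib

section
/- Let (σ^t)_{t≥0} be a fictitious-play sequence for a finite n-player strategic-form game, i.e., for every t ≥ 1 and every player i, σ^t_i = (1 − 1/t)·σ^{t−1}_i + (1/t)·β^t_i, where β^t_i is a best response of player i to the profile σ^{t−1}. If for every player i and every action a ∈ A_i the sequence σ^t_i(a) converges as t → ∞, then the limiting profile σ* (defined by σ*_i(a) = lim_{t→∞} σ^t_i(a)) is a Nash equilibrium of the game. -/
open Finset Filter Topology

/-- A mixed strategy for player `i`: nonnegative weights summing to 1. -/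
def IsMixed {n : ℕ} {A : Fin n → Type} [∀ i, Fintype (A i)]
    (i : Fin n) (σ : A i → ℝ) : Prop :=
  (∀ a, 0 ≤ σ a) ∧ ∑ a, σ a = 1

/-- Expected utility of player `i` under the mixed-strategy profile `σ`. -/
def expUtil {n : ℕ} {A : Fin n → Type} [∀ i, Fintype (A i)]
    (u : Fin n → (∀ j, A j) → ℝ) (i : Fin n) (σ : ∀ j, A j → ℝ) : ℝ :=
  ∑ a : ∀ j, A j, (∏ j, σ j (a j)) * u i a

/-- `β` is a best response of player `i` to the profile `σ`. -/
def IsBestResponse {n : ℕ} {A : Fin n → Type} [∀ i, Fintype (A i)]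
    (u : Fin n → (∀ j, A j) → ℝ) (i : Fin n) (σ : ∀ j, A j → ℝ) (β : A i → ℝ) : Prop :=
  IsMixed i β ∧ ∀ τ : A i → ℝ, IsMixed i τ →
    expUtil u i (Function.update σ i τ) ≤ expUtil u i (Function.update σ i β)

/-- `σ` is a Nash equilibrium: each `σ i` is a best response to `σ`. -/
def IsNash {n : ℕ} {A : Fin n → Type} [∀ i, Fintype (A i)]
    (u : Fin n → (∀ j, A j) → ℝ) (σ : ∀ j, A j → ℝ) : Prop :=
  (∀ i, IsMixed i (σ i)) ∧ ∀ i, IsBestResponse u i σ (σ i)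

section Aux


variable {n : ℕ} {A : Fin n → Type} [∀ i, Fintype (A i)]

open Classical in
noncomputable def Dcoef (u : Fin n → (∀ j, A j) → ℝ) (i : Fin n)
    (σ : ∀ j, A j → ℝ) (b : A i) : ℝ :=
  ∑ a ∈ Finset.univ.filter (fun a : ∀ j, A j => a i = b),
    (∏ j ∈ Finset.univ.erase i, σ j (a j)) * u i a

open Classical in
lemma expUtil_update (u : Fin n → (∀ j, A j) → ℝ) (i : Fin n)
    (σ : ∀ j, A j → ℝ) (τ : A i → ℝ) :
    expUtil u i (Function.update σ i τ) = ∑ b, τ b * Dcoef u i σ b := by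
  unfold expUtil Dcoef
  rw [← Finset.sum_fiberwise Finset.univ (fun a : ∀ j, A j => a i)
      (fun a => (∏ j, Function.update σ i τ j (a j)) * u i a)]
  refine Finset.sum_congr rfl fun b _ => ?_
  rw [Finset.mul_sum]
  refine Finset.sum_congr rfl fun a ha => ?_
  have hai : a i = b := (Finset.mem_filter.mp ha).2
  rw [← Finset.mul_prod_erase Finset.univ _ (Finset.mem_univ i)]
  have h1 : Function.update σ i τ i (a i) = τ b := by rw [hai]; simp
  have h2 : ∏ j ∈ Finset.univ.erase i, Function.update σ i τ j (a j)
      = ∏ j ∈ Finset.univ.erase i, σ j (a j) :=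
    Finset.prod_congr rfl fun j hj => by
      rw [Function.update_of_ne (Finset.mem_erase.mp hj).1]
  rw [h1, h2]; ring

lemma Dcoef_tendsto (u : Fin n → (∀ j, A j) → ℝ) (i : Fin n)
    (σ : ℕ → ∀ j, A j → ℝ) (σstar : ∀ j, A j → ℝ)
    (hconv : ∀ j a, Tendsto (fun t => σ t j a) atTop (𝓝 (σstar j a))) (b : A i) :
    Tendsto (fun t => Dcoef u i (σ t) b) atTop (𝓝 (Dcoef u i σstar b)) := by
  unfold Dcoef
  refine tendsto_finset_sum _ fun a _ => ?_
  exact (tendsto_finset_prod _ fun j _ => hconv j (a j)).mul_const _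

end Aux

/-- If the empirical distributions of fictitious play converge, the limit profile
is a Nash equilibrium. -/
theorem fictitiousPlay_converges_to_nash
    {n : ℕ} {A : Fin n → Type} [∀ i, Fintype (A i)] [∀ i, Nonempty (A i)]
    (u : Fin n → (∀ j, A j) → ℝ)
    (σ : ℕ → ∀ j, A j → ℝ) (β : ℕ → ∀ j, A j → ℝ)
    (hmix0 : ∀ i, IsMixed i (σ 0 i))
    (hbr : ∀ t : ℕ, ∀ i, IsBestResponse u i (σ t) (β (t + 1) i))
    (hrec : ∀ t : ℕ, ∀ i, ∀ a : A i,
      σ (t + 1) i a = (1 - 1 / ((t : ℝ) + 1)) * σ t i a + (1 / ((t : ℝ) + 1)) * β (t + 1) i a)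
    (σstar : ∀ j, A j → ℝ)
    (hconv : ∀ i, ∀ a : A i, Tendsto (fun t => σ t i a) atTop (𝓝 (σstar i a))) :
    IsNash u σstar := by
  classical
  have hmixβ : ∀ t i, IsMixed i (β (t + 1) i) := fun t i => (hbr t i).1
  have hmix : ∀ t i, IsMixed i (σ t i) := by
    intro t
    induction t with
    | zero => exact hmix0
    | succ t ih =>
      intro i
      have h1 : (0:ℝ) < (t:ℝ) + 1 := by positivity
      have h2 : (0:ℝ) ≤ 1 - 1 / ((t:ℝ) + 1) := by
        rw [sub_nonneg, div_le_one h1]; linarith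
      constructor
      · intro a
        rw [hrec t i a]
        have ha1 := (ih i).1 a
        have ha2 := (hmixβ t i).1 a
        have h3 : (0:ℝ) ≤ 1 / ((t:ℝ) + 1) := by positivity
        nlinarith
      · simp only [hrec t i]
        rw [Finset.sum_add_distrib, ← Finset.mul_sum, ← Finset.mul_sum,
          (ih i).2, (hmixβ t i).2]
        ring
  have hmixstar : ∀ i, IsMixed i (σstar i) := by
    intro i
    constructor
    · intro a
      exact ge_of_tendsto' (hconv i a) fun t => (hmix t i).1 a
    · have h1 : Tendsto (fun t => ∑ a, σ t i a) atTop (𝓝 (∑ a, σstar i a)) :=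
        tendsto_finset_sum _ fun a _ => hconv i a
      have h2 : (fun t => ∑ a, σ t i a) = fun _ => (1:ℝ) := funext fun t => (hmix t i).2
      rw [h2] at h1
      exact tendsto_nhds_unique h1 tendsto_const_nhds
  refine ⟨hmixstar, fun i => ⟨hmixstar i, ?_⟩⟩
  intro τ hτ
  rw [expUtil_update, expUtil_update]
  -- notation
  set e : ℕ → ℝ := fun t => ∑ b, |Dcoef u i (σ t) b - Dcoef u i σstar b| with he
  have hDconv : ∀ b : A i, Tendsto (fun t => Dcoef u i (σ t) b) atTop
      (𝓝 (Dcoef u i σstar b)) :=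
    Dcoef_tendsto u i σ σstar (fun j a => hconv j a)
  have heconv : Tendsto e atTop (𝓝 0) := by
    have h := tendsto_finset_sum (f := fun b (t : ℕ) => |Dcoef u i (σ t) b - Dcoef u i σstar b|)
      (a := fun b : A i => |Dcoef u i σstar b - Dcoef u i σstar b|) Finset.univ
      (fun b _ => ((hDconv b).sub tendsto_const_nhds).abs)
    simpa using h
  have hkey : ∀ x : A i → ℝ, IsMixed i x → ∀ t,
      |∑ b, x b * Dcoef u i (σ t) b - ∑ b, x b * Dcoef u i σstar b| ≤ e t := by
    intro x hx t
    rw [← Finset.sum_sub_distrib, he]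
    calc |∑ b, (x b * Dcoef u i (σ t) b - x b * Dcoef u i σstar b)|
        ≤ ∑ b, |x b * Dcoef u i (σ t) b - x b * Dcoef u i σstar b| :=
          Finset.abs_sum_le_sum_abs _ _
      _ ≤ ∑ b, |Dcoef u i (σ t) b - Dcoef u i σstar b| := by
          refine Finset.sum_le_sum fun b _ => ?_
          rw [← mul_sub, abs_mul, abs_of_nonneg (hx.1 b)]
          have hxle : x b ≤ 1 := by
            have h := Finset.single_le_sum (fun c _ => hx.1 c) (Finset.mem_univ b)
            rw [hx.2] at h; exact h
          nlinarith [abs_nonneg (Dcoef u i (σ t) b - Dcoef u i σstar b)]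
  -- recurrence for the linear form along σstar coefficients
  have hrecF : ∀ t : ℕ, ((t:ℝ) + 1) * ∑ b, σ (t+1) i b * Dcoef u i σstar b
      = (t:ℝ) * (∑ b, σ t i b * Dcoef u i σstar b)
        + ∑ b, β (t+1) i b * Dcoef u i σstar b := by
    intro t
    have h1 : ((t:ℝ) + 1) ≠ 0 := by positivity
    rw [Finset.mul_sum, Finset.mul_sum, ← Finset.sum_add_distrib]
    refine Finset.sum_congr rfl fun b _ => ?_
    rw [hrec t i b]
    field_simp
    ring
  have hsum : ∀ t : ℕ, (t:ℝ) * ∑ b, σ t i b * Dcoef u i σstar b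
      = ∑ s ∈ Finset.range t, ∑ b, β (s+1) i b * Dcoef u i σstar b := by
    intro t
    induction t with
    | zero => simp
    | succ t ih =>
      rw [Finset.sum_range_succ, ← ih]
      push_cast
      rw [hrecF t]
  -- lower bound on best-response values
  have hβlb : ∀ t : ℕ, (∑ b, τ b * Dcoef u i σstar b) - 2 * e t
      ≤ ∑ b, β (t+1) i b * Dcoef u i σstar b := by
    intro t
    have h1 := (hbr t i).2 τ hτ
    rw [expUtil_update, expUtil_update] at h1
    have h2 := abs_le.mp (hkey τ hτ t)
    have h3 := abs_le.mp (hkey (β (t+1) i) (hmixβ t i) t)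
    linarith [h2.1, h2.2, h3.1, h3.2]
  -- Cesàro
  have hces : Tendsto (fun t : ℕ => ((t:ℝ))⁻¹ * ∑ s ∈ Finset.range t, e s)
      atTop (𝓝 0) := heconv.cesaro
  have hFconv : Tendsto (fun t => ∑ b, σ t i b * Dcoef u i σstar b) atTop
      (𝓝 (∑ b, σstar i b * Dcoef u i σstar b)) :=
    tendsto_finset_sum _ fun b _ => (hconv i b).mul_const _
  have hq : Tendsto (fun t => (∑ b, σ t i b * Dcoef u i σstar b)
        - (∑ b, τ b * Dcoef u i σstar b)
        + 2 * (((t:ℝ))⁻¹ * ∑ s ∈ Finset.range t, e s)) atTop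
      (𝓝 ((∑ b, σstar i b * Dcoef u i σstar b)
        - (∑ b, τ b * Dcoef u i σstar b) + 2 * 0)) :=
    (hFconv.sub tendsto_const_nhds).add (hces.const_mul 2)
  have hqnn : ∀ᶠ t in atTop, (0:ℝ) ≤ (∑ b, σ t i b * Dcoef u i σstar b)
      - (∑ b, τ b * Dcoef u i σstar b)
      + 2 * (((t:ℝ))⁻¹ * ∑ s ∈ Finset.range t, e s) := by
    rw [eventually_atTop]
    refine ⟨1, fun t ht => ?_⟩
    have htpos : (0:ℝ) < (t:ℝ) := by exact_mod_cast ht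
    have h4 : (t:ℝ) * (∑ b, τ b * Dcoef u i σstar b) - 2 * ∑ s ∈ Finset.range t, e s
        ≤ (t:ℝ) * ∑ b, σ t i b * Dcoef u i σstar b := by
      rw [hsum t]
      calc (t:ℝ) * (∑ b, τ b * Dcoef u i σstar b) - 2 * ∑ s ∈ Finset.range t, e s
          = ∑ s ∈ Finset.range t, ((∑ b, τ b * Dcoef u i σstar b) - 2 * e s) := by
            rw [Finset.sum_sub_distrib, Finset.sum_const, Finset.card_range,
              nsmul_eq_mul, ← Finset.mul_sum]
        _ ≤ ∑ s ∈ Finset.range t, ∑ b, β (s+1) i b * Dcoef u i σstar b :=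
            Finset.sum_le_sum fun s _ => hβlb s
    have h5 : (t:ℝ) * (((t:ℝ))⁻¹ * ∑ s ∈ Finset.range t, e s)
        = ∑ s ∈ Finset.range t, e s := by
      field_simp
    nlinarith [h4, h5]
  have hfin := ge_of_tendsto hq hqnn
  linarith [hfin]
end

section
/- Value iteration from a pessimistic initialization converges monotonically to the optimal value: let v^0 : S → ℝ satisfy v^0 ≤ L v^0 pointwise, and let v* : S → ℝ be a least fixed point of L above v^0, i.e., L v* = v*, v^0 ≤ v* pointwise, and for every w : S → ℝ with L w = w and v^0 ≤ w pointwise one has v* ≤ w pointwise. Then the value-iteration sequence v^{n} := L^n v^0 is pointwise nondecreasing in n, satisfies v^n ≤ v* pointwise for every n, and converges pointwise to v*: for every s ∈ S, v^n(s) → v*(s) as n → ∞. -/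
open Finset Filter Topology

/-- The Bellman operator: `(L v)(s) = max_a [ r(s,a) + ∑_{s'} p(s,a,s')·v(s') ]`. -/
def bellman {S A : Type} [Fintype S] [Fintype A] [Nonempty A]
    (p : S → A → S → ℝ) (r : S → A → ℝ) (v : S → ℝ) : S → ℝ :=
  fun s => Finset.univ.sup' Finset.univ_nonempty
    (fun a : A => r s a + ∑ s', p s a s' * v s')

lemma bellman_mono {S A : Type} [Fintype S] [Fintype A] [Nonempty A]
    (p : S → A → S → ℝ) (r : S → A → ℝ)
    (hp0 : ∀ s a s', 0 ≤ p s a s')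
    (v w : S → ℝ) (h : ∀ s, v s ≤ w s) :
    ∀ s, bellman p r v s ≤ bellman p r w s := by
  intro s
  apply Finset.sup'_le
  intro a _
  refine le_trans ?_ (Finset.le_sup' (fun a : A => r s a + ∑ s', p s a s' * w s')
    (Finset.mem_univ a))
  gcongr with s' _
  · exact hp0 s a s'
  · exact h s'

/-- Value iteration from a pessimistic initialization converges monotonically to the
optimal value `vstar`, characterized as a least fixed point of the Bellman operator
above the initialization `v0`. -/
theorem value_iteration_pessimistic_converges
    {S A : Type} [Fintype S] [Nonempty S] [Fintype A] [Nonempty A]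
    (p : S → A → S → ℝ) (r : S → A → ℝ)
    (hp0 : ∀ s a s', 0 ≤ p s a s')
    (hp1 : ∀ s a, ∑ s', p s a s' = 1)
    (v0 vstar : S → ℝ)
    (h0 : ∀ s, v0 s ≤ bellman p r v0 s)
    (hfix : bellman p r vstar = vstar)
    (hpess : ∀ s, v0 s ≤ vstar s)
    (hleast : ∀ w : S → ℝ, bellman p r w = w → (∀ s, v0 s ≤ w s) → ∀ s, vstar s ≤ w s) :
    (∀ n s, (bellman p r)^[n] v0 s ≤ (bellman p r)^[n + 1] v0 s) ∧
    (∀ n s, (bellman p r)^[n] v0 s ≤ vstar s) ∧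
    (∀ s, Tendsto (fun n => (bellman p r)^[n] v0 s) atTop (𝓝 (vstar s))) := by
  set L := bellman p r with hL
  have hmono : ∀ v w : S → ℝ, (∀ s, v s ≤ w s) → ∀ s, L v s ≤ L w s :=
    bellman_mono p r hp0
  -- monotone in n
  have hstep : ∀ n s, L^[n] v0 s ≤ L^[n + 1] v0 s := by
    intro n
    induction n with
    | zero => simpa using h0
    | succ k ih =>
      intro s
      rw [Function.iterate_succ_apply', Function.iterate_succ_apply']
      exact hmono _ _ ih s
  -- bounded above by vstar
  have hbd : ∀ n s, L^[n] v0 s ≤ vstar s := by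
    intro n
    induction n with
    | zero => simpa using hpess
    | succ k ih =>
      intro s
      rw [Function.iterate_succ_apply']
      calc L (L^[k] v0) s ≤ L vstar s := hmono _ _ ih s
        _ = vstar s := by rw [hfix]
  refine ⟨hstep, hbd, ?_⟩
  -- limit
  have hmonoSeq : ∀ s, Monotone (fun n => L^[n] v0 s) := fun s =>
    monotone_nat_of_le_succ (fun n => hstep n s)
  have hbdd : ∀ s, BddAbove (Set.range (fun n => L^[n] v0 s)) := fun s =>
    ⟨vstar s, by rintro _ ⟨n, rfl⟩; exact hbd n s⟩
  set M : S → ℝ := fun s => ⨆ n, L^[n] v0 s with hM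
  have htend : ∀ s, Tendsto (fun n => L^[n] v0 s) atTop (𝓝 (M s)) := fun s =>
    tendsto_atTop_ciSup (hmonoSeq s) (hbdd s)
  have hle_M : ∀ n s, L^[n] v0 s ≤ M s := fun n s => le_ciSup (hbdd s) n
  have hM_le : ∀ s, M s ≤ vstar s := fun s => ciSup_le (fun n => hbd n s)
  have hv0M : ∀ s, v0 s ≤ M s := fun s => hle_M 0 s
  -- L M ≤ M
  have h1 : ∀ s, L M s ≤ M s := by
    intro s
    apply Finset.sup'_le
    intro a _
    have hsum : Tendsto (fun n => r s a + ∑ s', p s a s' * L^[n] v0 s') atTop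
        (𝓝 (r s a + ∑ s', p s a s' * M s')) := by
      apply Tendsto.const_add
      exact tendsto_finset_sum _ fun s' _ => (htend s').const_mul _
    refine le_of_tendsto hsum (Filter.Eventually.of_forall fun n => ?_)
    calc r s a + ∑ s', p s a s' * L^[n] v0 s'
        ≤ L (L^[n] v0) s := Finset.le_sup' (fun a : A => r s a + ∑ s', p s a s' * L^[n] v0 s') (Finset.mem_univ a)
      _ = L^[n + 1] v0 s := (congrFun (Function.iterate_succ_apply' L n v0) s).symm
      _ ≤ M s := hle_M _ s
  -- M ≤ L M
  have h2 : ∀ s, M s ≤ L M s := by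
    intro s
    apply ciSup_le
    intro n
    calc L^[n] v0 s ≤ L^[n + 1] v0 s := hstep n s
      _ = L (L^[n] v0) s := congrFun (Function.iterate_succ_apply' L n v0) s
      _ ≤ L M s := hmono _ _ (fun s' => hle_M n s') s
  have hMfix : L M = M := funext fun s => le_antisymm (h1 s) (h2 s)
  have hstarM : ∀ s, vstar s ≤ M s := hleast M hMfix hv0M
  have hMeq : M = vstar := funext fun s => le_antisymm (hM_le s) (hstarM s)
  intro s
  have := htend s
  rwa [hMeq] at this
end
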